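/- arXiv:2004.01074 — 3 statements merged into one kernel-verified Lean document; each statement's English description precedes it below -/
import Mathlib

section
/- The matrix A₀ = [[1, -1/2, 0], [1, 0, λ^β], [0, -2λ^β, 0]] (λ > 1, β > 2) has exactly one real eigenvalue, and this eigenvalue lies in the open interval (3/4, 1). -/
/-!
The characteristic polynomial of `A₀` is `x³ - x² + (2t² + 1/2) x - 2t²` with `t = λ^β > 1`.
Its linear coefficient exceeds `1/3`, which makes the cubic strictly increasing. It is negative
at `3/4` (value `15/64 - t²/2`) and equals `1/2` at `1`, so the intermediate value theorem places its unique real root in `(3/4, 1)`.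
-/

open Polynomial Set

theorem StrictMono.existsUnique_eq_and_mem_Ioo {α δ : Type*} [ConditionallyCompleteLinearOrder α]
    [TopologicalSpace α] [OrderTopology α] [DenselyOrdered α] [LinearOrder δ] [TopologicalSpace δ]
    [OrderClosedTopology δ] {f : α → δ} (hf : StrictMono f) (hc : Continuous f) {a b : α} {y : δ}
    (ha : f a < y) (hb : y < f b) :
    (∃! x, f x = y) ∧ ∀ x, f x = y → x ∈ Ioo a b := by
  have hab : a ≤ b := (hf.lt_iff_lt.mp (ha.trans hb)).le
  obtain ⟨x, -, hx⟩ := intermediate_value_Ioo hab hc.continuousOn ⟨ha, hb⟩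
  refine ⟨⟨x, hx, fun z hz => hf.injective (hz.trans hx.symm)⟩, fun z hz => ?_⟩
  exact ⟨hf.lt_iff_lt.mp (hz ▸ ha), hf.lt_iff_lt.mp (hz ▸ hb)⟩

theorem strictMono_cubic {c : ℝ} (hc : 1 / 3 < c) (d : ℝ) :
    StrictMono fun x : ℝ => x ^ 3 - x ^ 2 + c * x - d := by
  intro a b hab
  have hfactor : 0 < a ^ 2 + a * b + b ^ 2 - a - b + c := by
    nlinarith [sq_nonneg (a - b), sq_nonneg (a + b - 2 / 3)]
  have hdiff : b ^ 3 - b ^ 2 + c * b - d - (a ^ 3 - a ^ 2 + c * a - d)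
      = (b - a) * (a ^ 2 + a * b + b ^ 2 - a - b + c) := by ring
  have := mul_pos (sub_pos.mpr hab) hfactor
  show _ < _
  linarith

theorem charpoly_A₀_eval (t x : ℝ) :
    (Matrix.charpoly (!![1, -1/2, 0; 1, 0, t; 0, -2 * t, 0] : Matrix (Fin 3) (Fin 3) ℝ)).eval x
      = x ^ 3 - x ^ 2 + (2 * t ^ 2 + 1 / 2) * x - 2 * t ^ 2 := by
  simp [Matrix.charpoly, Matrix.charmatrix, Matrix.det_fin_three]
  ring

/-- The matrix `A₀ = [[1, -1/2, 0], [1, 0, λ^β], [0, -2λ^β, 0]]` (with `λ > 1`, `β > 2`)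
has exactly one real eigenvalue, and this eigenvalue lies in `(3/4, 1)`. -/
theorem stmt_4 (lam β : ℝ) (hlam : 1 < lam) (hβ : 2 < β) :
    (∃! μ : ℝ, (Matrix.charpoly (!![1, -1/2, 0; 1, 0, lam ^ β; 0, -2 * lam ^ β, 0] :
        Matrix (Fin 3) (Fin 3) ℝ)).IsRoot μ) ∧
    (∀ μ : ℝ, (Matrix.charpoly (!![1, -1/2, 0; 1, 0, lam ^ β; 0, -2 * lam ^ β, 0] :
        Matrix (Fin 3) (Fin 3) ℝ)).IsRoot μ → 3 / 4 < μ ∧ μ < 1) := by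
  have ht : 1 < lam ^ β := Real.one_lt_rpow hlam (by linarith)
  have hmono : StrictMono fun x : ℝ => x ^ 3 - x ^ 2 + (2 * (lam ^ β) ^ 2 + 1 / 2) * x
      - 2 * (lam ^ β) ^ 2 :=
    strictMono_cubic (by nlinarith) _
  have hroot := StrictMono.existsUnique_eq_and_mem_Ioo
    (f := fun x => (Matrix.charpoly (!![1, -1/2, 0; 1, 0, lam ^ β; 0, -2 * lam ^ β, 0] :
        Matrix (Fin 3) (Fin 3) ℝ)).eval x) (a := 3 / 4) (b := 1) (y := 0)
    (by simpa only [charpoly_A₀_eval] using hmono) (Polynomial.continuous _)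
    (by simp only [charpoly_A₀_eval]; nlinarith) (by simp only [charpoly_A₀_eval]; norm_num)
  exact hroot
end

section
/- Suppose real numbers k, a, b, μ, ν, ω, y₁, y₂, y₃, z₁, z₂, z₃ satisfy: ν ∈ (0,1), μ ≥ 1, |a| < ωk, |b| < ωk, k > 0, ω < ν²/(100μ⁴), z₃ - y₁y₃ ≥ ν, |y₁|,|y₂|,|y₃|,|z₁|,|z₂|,|z₃| ≤ μ. Set V = (k - a)(z₃ - y₁y₃) + b(y₁y₂ - y₂² - y₃² + z₂ - z₁) and W = (a² + b²)y₃ - k(ay₃ + by₂ - by₁). Then V ≥ 4kν/5 and |W| ≤ ν²k²/(25μ³). -/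
/-! Both coefficients are perturbations of their values at `a = b = 0`, namely
`V₀ = k (z₃ - y₁ y₃) ≥ k ν` and `W₀ = 0`. With `ε = ν² k / (100 μ⁴)` bounding `|a|` and `|b|`,
every error term is `ε` times a monomial of degree at most two in quantities bounded by `μ`, and
`ε` is small enough that these errors cost at most `6 k ν / 100` in `V` and at most
`4 k ε μ = ν² k² / (25 μ³)` in `W`. -/

lemma abs_sub_sq_add_sub_le {y₁ y₂ y₃ z₁ z₂ μ : ℝ} (hμ : 1 ≤ μ)
    (hy₁ : |y₁| ≤ μ) (hy₂ : |y₂| ≤ μ) (hy₃ : |y₃| ≤ μ) (hz₁ : |z₁| ≤ μ) (hz₂ : |z₂| ≤ μ) :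
    |y₁ * y₂ - y₂ ^ 2 - y₃ ^ 2 + z₂ - z₁| ≤ 5 * μ ^ 2 := by
  have hy₁₂ : |y₁ * y₂| ≤ μ ^ 2 := by
    rw [abs_mul, sq]; exact mul_le_mul hy₁ hy₂ (abs_nonneg _) (by linarith)
  have hy₂' : |y₂ ^ 2| ≤ μ ^ 2 := by rw [abs_pow]; gcongr
  have hy₃' : |y₃ ^ 2| ≤ μ ^ 2 := by rw [abs_pow]; gcongr
  calc |y₁ * y₂ - y₂ ^ 2 - y₃ ^ 2 + z₂ - z₁|
      ≤ |y₁ * y₂| + |y₂ ^ 2| + |y₃ ^ 2| + |z₂| + |z₁| := by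
        refine (abs_sub _ _).trans (add_le_add_left ((abs_add_le _ _).trans ?_) _)
        gcongr
        exact (abs_sub _ _).trans (add_le_add_left (abs_sub _ _) _)
    _ ≤ 5 * μ ^ 2 := by nlinarith

lemma le_perturbed_linear_coeff {k a b ε ν μ D S : ℝ} (hν : 0 ≤ ν)
    (ha : |a| ≤ ε) (hb : |b| ≤ ε) (hεk : ε ≤ k / 100) (hεμ : ε * μ ^ 2 ≤ ν * k / 100)
    (hD : ν ≤ D) (hS : |S| ≤ 5 * μ ^ 2) :
    4 * k * ν / 5 ≤ (k - a) * D + b * S := by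
  have hε : 0 ≤ ε := (abs_nonneg a).trans ha
  have hka : k - ε ≤ k - a := by linarith [le_abs_self a]
  have hlin : (k - ε) * ν ≤ (k - a) * D := mul_le_mul hka hD hν (by linarith)
  have hbS : -(ε * (5 * μ ^ 2)) ≤ b * S := by
    refine neg_le_of_abs_le ?_
    rw [abs_mul]; exact mul_le_mul hb hS (abs_nonneg _) hε
  nlinarith

lemma abs_perturbed_constant_coeff_le {k a b ε μ y₁ y₂ y₃ : ℝ} (hk : 0 ≤ k)
    (ha : |a| ≤ ε) (hb : |b| ≤ ε) (hy₁ : |y₁| ≤ μ) (hy₂ : |y₂| ≤ μ) (hy₃ : |y₃| ≤ μ) :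
    |(a ^ 2 + b ^ 2) * y₃ - k * (a * y₃ + b * y₂ - b * y₁)| ≤ (2 * ε ^ 2 + 3 * k * ε) * μ := by
  have hε : 0 ≤ ε := (abs_nonneg a).trans ha
  have hprod {x y : ℝ} (hx : |x| ≤ ε) (hy : |y| ≤ μ) : |x * y| ≤ ε * μ := by
    rw [abs_mul]; exact mul_le_mul hx hy (abs_nonneg _) hε
  have hsq : |a ^ 2 + b ^ 2| ≤ 2 * ε ^ 2 := by
    rw [abs_of_nonneg (by positivity)]
    nlinarith [sq_le_sq.mpr (ha.trans (le_abs_self ε)), sq_le_sq.mpr (hb.trans (le_abs_self ε))]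
  have hlin : |a * y₃ + b * y₂ - b * y₁| ≤ 3 * (ε * μ) :=
    calc |a * y₃ + b * y₂ - b * y₁| ≤ |a * y₃| + |b * y₂| + |b * y₁| :=
          (abs_sub _ _).trans (add_le_add_left (abs_add_le _ _) _)
      _ ≤ 3 * (ε * μ) := by linarith [hprod ha hy₃, hprod hb hy₂, hprod hb hy₁]
  calc |(a ^ 2 + b ^ 2) * y₃ - k * (a * y₃ + b * y₂ - b * y₁)|
      ≤ |a ^ 2 + b ^ 2| * |y₃| + k * |a * y₃ + b * y₂ - b * y₁| :=
        (abs_sub _ _).trans_eq (by rw [abs_mul, abs_mul, abs_of_nonneg hk])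
    _ ≤ 2 * ε ^ 2 * μ + k * (3 * (ε * μ)) := by gcongr
    _ = (2 * ε ^ 2 + 3 * k * ε) * μ := by ring

theorem stmt_6_general (k a b μ ν ω y₁ y₂ y₃ z₁ z₂ z₃ : ℝ)
    (hν0 : 0 < ν) (hν1 : ν < 1) (hμ : 1 ≤ μ)
    (ha : |a| < ω * k) (hb : |b| < ω * k) (hk : 0 < k)
    (hω : ω < ν ^ 2 / (100 * μ ^ 4))
    (hz : z₃ - y₁ * y₃ ≥ ν)
    (hy₁ : |y₁| ≤ μ) (hy₂ : |y₂| ≤ μ) (hy₃ : |y₃| ≤ μ)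
    (hz₁ : |z₁| ≤ μ) (hz₂ : |z₂| ≤ μ) :
    (k - a) * (z₃ - y₁ * y₃) + b * (y₁ * y₂ - y₂ ^ 2 - y₃ ^ 2 + z₂ - z₁) ≥ 4 * k * ν / 5 ∧
    |(a ^ 2 + b ^ 2) * y₃ - k * (a * y₃ + b * y₂ - b * y₁)| ≤ ν ^ 2 * k ^ 2 / (25 * μ ^ 3) := by
  set ε := ν ^ 2 * k / (100 * μ ^ 4) with hε
  have hωk : ω * k ≤ ε := by rw [hε, mul_div_right_comm]; gcongr
  have haε : |a| ≤ ε := ha.le.trans hωk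
  have hbε : |b| ≤ ε := hb.le.trans hωk
  have hμ2 : 1 ≤ μ ^ 2 := one_le_pow₀ hμ
  have hεk : ε ≤ k / 100 := by
    rw [hε, div_le_div_iff₀ (by positivity) (by norm_num)]
    nlinarith [mul_le_mul_of_nonneg_left (show ν ^ 2 ≤ μ ^ 4 by nlinarith) hk.le]
  refine ⟨le_perturbed_linear_coeff hν0.le haε hbε hεk ?_ hz
    (abs_sub_sq_add_sub_le hμ hy₁ hy₂ hy₃ hz₁ hz₂), ?_⟩
  · rw [hε, div_mul_eq_mul_div, div_le_div_iff₀ (by positivity) (by norm_num)]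
    nlinarith [mul_le_mul_of_nonneg_left (show ν * μ ^ 2 ≤ μ ^ 4 by nlinarith)
      (mul_pos hν0 hk).le]
  · refine (abs_perturbed_constant_coeff_le hk.le haε hbε hy₁ hy₂ hy₃).trans ?_
    have hε0 : 0 ≤ ε := (abs_nonneg a).trans haε
    calc (2 * ε ^ 2 + 3 * k * ε) * μ ≤ 4 * k * ε * μ := by gcongr; nlinarith
      _ = ν ^ 2 * k ^ 2 / (25 * μ ^ 3) := by rw [hε]; field_simp; ring

/-- Key estimate for the coefficients of the quadratic `Uρ² + Vρ + W`:
`V ≥ 4kν/5` and `|W| ≤ ν²k²/(25μ³)`. -/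
theorem stmt_6 (k a b μ ν ω y₁ y₂ y₃ z₁ z₂ z₃ : ℝ)
    (hν0 : 0 < ν) (hν1 : ν < 1) (hμ : 1 ≤ μ)
    (ha : |a| < ω * k) (hb : |b| < ω * k) (hk : 0 < k)
    (hω : ω < ν ^ 2 / (100 * μ ^ 4))
    (hz : z₃ - y₁ * y₃ ≥ ν)
    (hy₁ : |y₁| ≤ μ) (hy₂ : |y₂| ≤ μ) (hy₃ : |y₃| ≤ μ)
    (hz₁ : |z₁| ≤ μ) (hz₂ : |z₂| ≤ μ) (hz₃ : |z₃| ≤ μ) :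
    (k - a) * (z₃ - y₁ * y₃) + b * (y₁ * y₂ - y₂ ^ 2 - y₃ ^ 2 + z₂ - z₁) ≥ 4 * k * ν / 5 ∧
    |(a ^ 2 + b ^ 2) * y₃ - k * (a * y₃ + b * y₂ - b * y₁)| ≤ ν ^ 2 * k ^ 2 / (25 * μ ^ 3) :=
  stmt_6_general k a b μ ν ω y₁ y₂ y₃ z₁ z₂ z₃ hν0 hν1 hμ ha hb hk hω hz hy₁ hy₂ hy₃ hz₁ hz₂
end

section
/- Continuity of the time-ordered exponential: if A₁, A₂ ∈ L¹((a,b); Mat(n×n, ℝ)) and B₁ = Texp(A₁), B₂ = Texp(A₂) are the associated fundamental solution matrices at time b (i.e. Bᵢh₀ = hᵢ(b) where hᵢ solves ḣᵢ = Aᵢhᵢ, hᵢ(a) = h₀), then ‖B₁ - B₂‖ ≤ exp(max(‖A₁‖_{L¹}, ‖A₂‖_{L¹})) · ∫_a^b ‖A₁(τ) - A₂(τ)‖ dτ. -/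
/-!
Gronwall gives `‖hᵢ(t)‖ ≤ ‖h₀‖ e^{cᵢ(t)}` with `cᵢ(t) = ∫ₐᵗ ‖Aᵢ‖`. Writing
`A₁h₁ - A₂h₂ = Aᵢ(h₁ - h₂) + (A₁ - A₂)hⱼ` with `‖Aᵢ‖` the smaller norm, the difference
`u = ‖h₁ - h₂‖` satisfies `u(t) ≤ ∫ₐᵗ (min ‖Aᵢ‖ u + ‖A₁ - A₂‖ ‖h₀‖ e^{M})` with
`M = max c₁ c₂`, and Gronwall once more gives the bound, because `∫ₛᵇ min ‖Aᵢ‖ ≤ M(b) - M(s)`.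
As the `Aᵢ` are only integrable, Gronwall's inequality is proved with the fundamental theorem of
calculus for absolutely continuous functions.
-/

open MeasureTheory Set Real

theorem LipschitzOnWith.comp_absolutelyContinuousOnInterval {X Y : Type*}
    [PseudoMetricSpace X] [PseudoMetricSpace Y] {φ : X → Y} {s : Set X} {L : NNReal}
    {f : ℝ → X} {a b : ℝ} (hφ : LipschitzOnWith L φ s)
    (hf : AbsolutelyContinuousOnInterval f a b) (hfs : MapsTo f (uIcc a b) s) :
    AbsolutelyContinuousOnInterval (φ ∘ f) a b := by
  rw [absolutelyContinuousOnInterval_iff] at hf ⊢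
  intro ε hε
  obtain ⟨δ, hδ, hfδ⟩ := hf (ε / (L + 1)) (by positivity)
  refine ⟨δ, hδ, fun E hE hEδ => ?_⟩
  calc ∑ i ∈ Finset.range E.1, dist ((φ ∘ f) (E.2 i).1) ((φ ∘ f) (E.2 i).2)
      ≤ ∑ i ∈ Finset.range E.1, L * dist (f (E.2 i).1) (f (E.2 i).2) :=
        Finset.sum_le_sum fun i hi =>
          hφ.dist_le_mul _ (hfs (hE.1 i hi).1) _ (hfs (hE.1 i hi).2)
    _ = L * ∑ i ∈ Finset.range E.1, dist (f (E.2 i).1) (f (E.2 i).2) :=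
        (Finset.mul_sum _ _ _).symm
    _ ≤ L * (ε / (L + 1)) := by gcongr; exact (hfδ E hE hEδ).le
    _ < ε := by
        rw [mul_div_assoc', div_lt_iff₀ (by positivity)]
        linarith

theorem ContDiff.comp_absolutelyContinuousOnInterval {φ : ℝ → ℝ} (hφ : ContDiff ℝ 1 φ)
    {f : ℝ → ℝ} {a b : ℝ} (hf : AbsolutelyContinuousOnInterval f a b) :
    AbsolutelyContinuousOnInterval (φ ∘ f) a b := by
  obtain ⟨C, hC⟩ := hf.exists_bound
  obtain ⟨L, hL⟩ := hφ.contDiffOn.exists_lipschitzOnWith (s := Icc (-C) C) one_ne_zero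
    (convex_Icc _ _) isCompact_Icc
  exact hL.comp_absolutelyContinuousOnInterval hf fun x hx => abs_le.1 (hC x hx)

/-- Gronwall's inequality in integral form, for an integrable (not necessarily continuous)
kernel `k`. -/
theorem le_exp_integral_mul_of_le_add_integral {a b C : ℝ} {k g u : ℝ → ℝ}
    (hk : IntervalIntegrable k volume a b) (hk₀ : ∀ t ∈ Icc a b, 0 ≤ k t)
    (hg : IntervalIntegrable g volume a b) (hu : ContinuousOn u (Icc a b))
    (h : ∀ t ∈ Icc a b, u t ≤ C + ∫ s in a..t, (k s * u s + g s)) {t : ℝ} (ht : t ∈ Icc a b) :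
    u t ≤ exp (∫ s in a..t, k s) * (C + ∫ s in a..t, exp (-∫ r in a..s, k r) * g s) := by
  have hsub : uIcc a t ⊆ uIcc a b := uIcc_subset_uIcc_left (Icc_subset_uIcc ht)
  set K : ℝ → ℝ := fun t => ∫ s in a..t, k s
  set v : ℝ → ℝ := fun t => C + ∫ s in a..t, (k s * u s + g s)
  have hkug : IntervalIntegrable (fun s => k s * u s + g s) volume a t :=
    ((hk.mono_set hsub).mul_continuousOn
      (hu.mono (by rw [uIcc_of_le ht.1]; exact Icc_subset_Icc_right ht.2))).add
      (hg.mono_set hsub)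
  have hE : AbsolutelyContinuousOnInterval (fun t => exp (-K t)) a t :=
    contDiff_exp.comp_absolutelyContinuousOnInterval
      ((hk.mono_set hsub).absolutelyContinuousOnInterval_intervalIntegral left_mem_uIcc).neg
  have hv : AbsolutelyContinuousOnInterval v a t :=
    (LipschitzWith.const C).lipschitzOnWith.absolutelyContinuousOnInterval.add
      (hkug.absolutelyContinuousOnInterval_intervalIntegral left_mem_uIcc)
  -- `(e^{-K} v)' = e^{-K} (k (u - v) + g) ≤ e^{-K} g` wherever `K' = k` and `v' = k u + g`
  have hderiv : (fun x => deriv (fun t => exp (-K t) * v t) x) ≤ᵐ[volume.restrict (Icc a t)]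
      fun x => exp (-K x) * g x := by
    rw [Filter.EventuallyLE, ae_restrict_iff' measurableSet_Icc]
    filter_upwards [hk.ae_hasDerivAt_integral, hkug.ae_hasDerivAt_integral] with x hK hv hx
    have hxb : x ∈ Icc a b := ⟨hx.1, hx.2.trans ht.2⟩
    have hd : HasDerivAt (fun t => exp (-K t) * v t)
        (exp (-K x) * -k x * v x + exp (-K x) * (k x * u x + g x)) x :=
      (hK (Icc_subset_uIcc hxb) a left_mem_uIcc).fun_neg.exp.fun_mul
        ((hv (Icc_subset_uIcc hx) a left_mem_uIcc).const_add C)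
    rw [hd.deriv]
    have : exp (-K x) * (k x * (u x - v x)) ≤ 0 :=
      mul_nonpos_of_nonneg_of_nonpos (exp_pos _).le
        (mul_nonpos_of_nonneg_of_nonpos (hk₀ x hxb) (sub_nonpos.2 (h x hxb)))
    linarith
  have hFTC := (hE.fun_mul hv).integral_deriv_eq_sub
  have hmono := intervalIntegral.integral_mono_ae_restrict ht.1
    (hE.fun_mul hv).intervalIntegrable_deriv ((hg.mono_set hsub).continuousOn_mul hE.continuousOn)
    hderiv
  simp only [K, v, intervalIntegral.integral_same, neg_zero, exp_zero, one_mul, add_zero]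
    at hFTC
  calc u t ≤ v t := h t ht
    _ = exp (K t) * (exp (-K t) * v t) := by rw [← mul_assoc, ← exp_add]; simp
    _ ≤ _ := by gcongr; linarith

theorem ContinuousLinearMap.norm_apply_sub_apply_le {𝕜 E F : Type*} [NontriviallyNormedField 𝕜]
    [SeminormedAddCommGroup E] [SeminormedAddCommGroup F] [NormedSpace 𝕜 E] [NormedSpace 𝕜 F]
    (f g : E →L[𝕜] F) (x y : E) :
    ‖f x - g y‖ ≤ min ‖f‖ ‖g‖ * ‖x - y‖ + ‖f - g‖ * max ‖x‖ ‖y‖ := by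
  rw [min_mul_of_nonneg _ _ (norm_nonneg _), ← min_add_add_right]
  refine le_min ?_ ?_
  · calc ‖f x - g y‖ = ‖f (x - y) + (f - g) y‖ := by simp
      _ ≤ ‖f‖ * ‖x - y‖ + ‖f - g‖ * ‖y‖ :=
          norm_add_le_of_le (f.le_opNorm _) ((f - g).le_opNorm _)
      _ ≤ _ := by gcongr; exact le_max_right _ _
  · calc ‖f x - g y‖ = ‖g (x - y) + (f - g) x‖ := by simp
      _ ≤ ‖g‖ * ‖x - y‖ + ‖f - g‖ * ‖x‖ :=
          norm_add_le_of_le (g.le_opNorm _) ((f - g).le_opNorm _)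
      _ ≤ _ := by gcongr; exact le_max_left _ _

theorem IntervalIntegrable.min {μ : Measure ℝ} {a b : ℝ} {f g : ℝ → ℝ}
    (hf : IntervalIntegrable f μ a b) (hg : IntervalIntegrable g μ a b) :
    IntervalIntegrable (fun x => min (f x) (g x)) μ a b :=
  ⟨hf.1.inf hg.1, hf.2.inf hg.2⟩

theorem integral_min_add_max_integral_le {a b s : ℝ} {f g : ℝ → ℝ}
    (hf : IntervalIntegrable f volume a b) (hg : IntervalIntegrable g volume a b)
    (hs : s ∈ Icc a b) :
    (∫ r in s..b, min (f r) (g r)) + max (∫ r in a..s, f r) (∫ r in a..s, g r) ≤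
      max (∫ r in a..b, f r) (∫ r in a..b, g r) := by
  wlog hfg : (∫ r in a..s, g r) ≤ ∫ r in a..s, f r generalizing f g with H
  · simpa only [min_comm, max_comm] using H hg hf (le_of_not_ge hfg)
  have has : uIcc a s ⊆ uIcc a b := uIcc_subset_uIcc_left (Icc_subset_uIcc hs)
  have hsb : uIcc s b ⊆ uIcc a b := uIcc_subset_uIcc_right (Icc_subset_uIcc hs)
  calc (∫ r in s..b, min (f r) (g r)) + max (∫ r in a..s, f r) (∫ r in a..s, g r)
      ≤ (∫ r in s..b, f r) + ∫ r in a..s, f r := by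
        rw [max_eq_left hfg]
        gcongr
        exact intervalIntegral.integral_mono_on hs.2 ((hf.min hg).mono_set hsb) (hf.mono_set hsb)
          fun r _ => min_le_left _ _
    _ = ∫ r in a..b, f r := by
        rw [add_comm, intervalIntegral.integral_add_adjacent_intervals (hf.mono_set has)
          (hf.mono_set hsb)]
    _ ≤ _ := le_max_left _ _

theorem exp_integral_min_mul_integral_le {a b : ℝ} (hab : a ≤ b) {f₁ f₂ d : ℝ → ℝ}
    (hf₁ : IntervalIntegrable f₁ volume a b) (hf₂ : IntervalIntegrable f₂ volume a b)
    (hd : IntervalIntegrable d volume a b) (hd₀ : ∀ s ∈ Icc a b, 0 ≤ d s) :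
    exp (∫ s in a..b, min (f₁ s) (f₂ s)) *
        ∫ s in a..b, exp (-∫ r in a..s, min (f₁ r) (f₂ r)) *
          (d s * exp (max (∫ r in a..s, f₁ r) (∫ r in a..s, f₂ r))) ≤
      exp (max (∫ s in a..b, f₁ s) (∫ s in a..b, f₂ s)) * ∫ s in a..b, d s := by
  set K : ℝ → ℝ := fun t => ∫ r in a..t, min (f₁ r) (f₂ r)
  set M : ℝ → ℝ := fun t => max (∫ r in a..t, f₁ r) (∫ r in a..t, f₂ r)
  have hk := hf₁.min hf₂
  have hK : ContinuousOn K (uIcc a b) :=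
    intervalIntegral.continuousOn_primitive_interval' hk left_mem_uIcc
  have hM : ContinuousOn M (uIcc a b) :=
    (intervalIntegral.continuousOn_primitive_interval' hf₁ left_mem_uIcc).sup
      (intervalIntegral.continuousOn_primitive_interval' hf₂ left_mem_uIcc)
  have hKM : ∀ s ∈ Icc a b, -K s + M s ≤ M b - K b := by
    intro s hs
    have := integral_min_add_max_integral_le hf₁ hf₂ hs
    rw [← intervalIntegral.integral_interval_sub_left hk
      (hk.mono_set (uIcc_subset_uIcc_left (Icc_subset_uIcc hs)))] at this
    linarith
  calc exp (K b) * ∫ s in a..b, exp (-K s) * (d s * exp (M s))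
      ≤ exp (K b) * ∫ s in a..b, exp (M b - K b) * d s := by
        gcongr
        refine intervalIntegral.integral_mono_on hab
          ((hd.mul_continuousOn (continuous_exp.comp_continuousOn hM)).continuousOn_mul
            (continuous_exp.comp_continuousOn hK.neg)) (hd.const_mul _) fun s hs => ?_
        calc exp (-K s) * (d s * exp (M s)) = exp (-K s + M s) * d s := by rw [exp_add]; ring
          _ ≤ _ := by gcongr; exacts [hd₀ s hs, hKM s hs]
    _ = exp (M b) * ∫ s in a..b, d s := by
        rw [intervalIntegral.integral_const_mul, ← mul_assoc, ← exp_add, add_sub_cancel]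

section LinearIntegralEquation

variable {E : Type*} [NormedAddCommGroup E] [NormedSpace ℝ E] {a b : ℝ}

theorem IntervalIntegrable.clm_apply_of_continuousOn (hab : a ≤ b) {A : ℝ → E →L[ℝ] E}
    (hA : IntervalIntegrable A volume a b) {h : ℝ → E} (hh : ContinuousOn h (Icc a b)) :
    IntervalIntegrable (fun s => A s (h s)) volume a b := by
  obtain ⟨C, hC⟩ := isCompact_Icc.exists_bound_of_continuousOn hh
  rw [intervalIntegrable_iff_integrableOn_Ioc_of_le hab] at hA ⊢
  have hmeas : AEStronglyMeasurable (fun s => A s (h s)) (volume.restrict (Ioc a b)) :=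
    isBoundedBilinearMap_apply.continuous.comp_aestronglyMeasurable
      (hA.aestronglyMeasurable.prodMk
        ((hh.mono Ioc_subset_Icc_self).aestronglyMeasurable measurableSet_Ioc))
  refine Integrable.mono' (hA.norm.mul_const C) hmeas ?_
  filter_upwards [ae_restrict_mem measurableSet_Ioc] with s hs
  exact (A s).le_opNorm_of_le (hC s (Ioc_subset_Icc_self hs))

variable {A : ℝ → E →L[ℝ] E} {h₀ : E} {h : ℝ → E}

theorem norm_le_mul_exp_of_eq_add_integral (hab : a ≤ b) (hA : IntervalIntegrable A volume a b)
    (hh : ContinuousOn h (Icc a b)) (heq : ∀ t ∈ Icc a b, h t = h₀ + ∫ τ in a..t, A τ (h τ))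
    {t : ℝ} (ht : t ∈ Icc a b) :
    ‖h t‖ ≤ ‖h₀‖ * exp (∫ τ in a..t, ‖A τ‖) := by
  have hAh := hA.clm_apply_of_continuousOn hab hh
  have hAnh : IntervalIntegrable (fun τ => ‖A τ‖ * ‖h τ‖ + (0 : ℝ)) volume a b := by
    simpa using hA.norm.mul_continuousOn (by rw [uIcc_of_le hab]; exact hh.norm)
  have key := le_exp_integral_mul_of_le_add_integral (C := ‖h₀‖) (g := fun _ => 0) hA.norm
    (fun _ _ => norm_nonneg _) intervalIntegrable_const hh.norm (fun s hs => ?_) ht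
  · simpa [mul_comm] using key
  have hsub := uIcc_subset_uIcc_left (Icc_subset_uIcc hs)
  calc ‖h s‖ ≤ ‖h₀‖ + ∫ τ in a..s, ‖A τ (h τ)‖ := by
        rw [heq s hs]
        exact norm_add_le_of_le le_rfl (intervalIntegral.norm_integral_le_integral_norm hs.1)
    _ ≤ ‖h₀‖ + ∫ τ in a..s, (‖A τ‖ * ‖h τ‖ + 0) := by
        gcongr
        refine intervalIntegral.integral_mono_on hs.1 (hAh.mono_set hsub).norm
          (hAnh.mono_set hsub) fun τ _ => ?_
        simpa using (A τ).le_opNorm (h τ)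

theorem norm_sub_le_of_eq_add_integral (hab : a ≤ b) {A₁ A₂ : ℝ → E →L[ℝ] E}
    (hA₁ : IntervalIntegrable A₁ volume a b) (hA₂ : IntervalIntegrable A₂ volume a b)
    {h₁ h₂ : ℝ → E} (hh₁ : ContinuousOn h₁ (Icc a b)) (hh₂ : ContinuousOn h₂ (Icc a b))
    (heq₁ : ∀ t ∈ Icc a b, h₁ t = h₀ + ∫ τ in a..t, A₁ τ (h₁ τ))
    (heq₂ : ∀ t ∈ Icc a b, h₂ t = h₀ + ∫ τ in a..t, A₂ τ (h₂ τ)) :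
    ‖h₁ b - h₂ b‖ ≤ exp (max (∫ τ in a..b, ‖A₁ τ‖) (∫ τ in a..b, ‖A₂ τ‖)) *
      (∫ τ in a..b, ‖A₁ τ - A₂ τ‖) * ‖h₀‖ := by
  set M : ℝ → ℝ := fun t => max (∫ τ in a..t, ‖A₁ τ‖) (∫ τ in a..t, ‖A₂ τ‖)
  set g : ℝ → ℝ := fun s => ‖A₁ s - A₂ s‖ * ‖h₀‖ * exp (M s)
  have hd := (hA₁.sub hA₂).norm.mul_const ‖h₀‖
  have hk := hA₁.norm.min hA₂.norm
  have hg : IntervalIntegrable g volume a b :=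
    hd.mul_continuousOn (continuous_exp.comp_continuousOn
      ((intervalIntegral.continuousOn_primitive_interval' hA₁.norm left_mem_uIcc).sup
        (intervalIntegral.continuousOn_primitive_interval' hA₂.norm left_mem_uIcc)))
  have hsol : ∀ s ∈ Icc a b, max ‖h₁ s‖ ‖h₂ s‖ ≤ ‖h₀‖ * exp (M s) := fun s hs =>
    max_le ((norm_le_mul_exp_of_eq_add_integral hab hA₁ hh₁ heq₁ hs).trans
        (by gcongr; exact le_max_left _ _))
      ((norm_le_mul_exp_of_eq_add_integral hab hA₂ hh₂ heq₂ hs).trans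
        (by gcongr; exact le_max_right _ _))
  have hAh₁ := hA₁.clm_apply_of_continuousOn hab hh₁
  have hAh₂ := hA₂.clm_apply_of_continuousOn hab hh₂
  have hkg : IntervalIntegrable (fun s => min ‖A₁ s‖ ‖A₂ s‖ * ‖h₁ s - h₂ s‖ + g s) volume a b :=
    (hk.mul_continuousOn (by rw [uIcc_of_le hab]; exact (hh₁.sub hh₂).norm)).add hg
  have key := le_exp_integral_mul_of_le_add_integral (C := 0) hk
    (fun _ _ => le_min (norm_nonneg _) (norm_nonneg _)) hg (hh₁.sub hh₂).norm
    (fun t ht => ?_) ⟨hab, le_rfl⟩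
  · rw [zero_add] at key
    refine key.trans ?_
    rw [mul_assoc, ← intervalIntegral.integral_mul_const]
    exact exp_integral_min_mul_integral_le hab hA₁.norm hA₂.norm hd fun s _ => by positivity
  have hsub := uIcc_subset_uIcc_left (Icc_subset_uIcc ht)
  calc ‖h₁ t - h₂ t‖ = ‖∫ s in a..t, (A₁ s (h₁ s) - A₂ s (h₂ s))‖ := by
        rw [heq₁ t ht, heq₂ t ht, add_sub_add_left_eq_sub,
          intervalIntegral.integral_sub (hAh₁.mono_set hsub) (hAh₂.mono_set hsub)]
    _ ≤ ∫ s in a..t, ‖A₁ s (h₁ s) - A₂ s (h₂ s)‖ :=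
        intervalIntegral.norm_integral_le_integral_norm ht.1
    _ ≤ ∫ s in a..t, (min ‖A₁ s‖ ‖A₂ s‖ * ‖h₁ s - h₂ s‖ + g s) := by
        refine intervalIntegral.integral_mono_on ht.1 ((hAh₁.sub hAh₂).mono_set hsub).norm
          (hkg.mono_set hsub) fun s hs => ?_
        refine (ContinuousLinearMap.norm_apply_sub_apply_le _ _ _ _).trans (add_le_add le_rfl ?_)
        simp only [g, mul_assoc]
        exact mul_le_mul_of_nonneg_left (hsol s ⟨hs.1, hs.2.trans ht.2⟩) (norm_nonneg _)
    _ = 0 + _ := (zero_add _).symm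

end LinearIntegralEquation

/-- Continuity of the time-ordered exponential: if `B₁, B₂` are the solution operators
(from time `a` to time `b`) of the linear ODEs `ḣ = A₁(t)h` and `ḣ = A₂(t)h`
(equivalently, `Bᵢ h₀ = hᵢ(b)` where `hᵢ` solves the integral equation with data `h₀`), then
`‖B₁ - B₂‖ ≤ exp(max(‖A₁‖_{L¹}, ‖A₂‖_{L¹})) · ∫_a^b ‖A₁(τ) - A₂(τ)‖ dτ`. -/
theorem stmt_10 (n : ℕ) (a b : ℝ) (hab : a ≤ b)
    (A₁ A₂ : ℝ → (EuclideanSpace ℝ (Fin n) →L[ℝ] EuclideanSpace ℝ (Fin n)))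
    (hA₁ : IntervalIntegrable A₁ volume a b)
    (hA₂ : IntervalIntegrable A₂ volume a b)
    (B₁ B₂ : EuclideanSpace ℝ (Fin n) →L[ℝ] EuclideanSpace ℝ (Fin n))
    (hB₁ : ∀ h₀ : EuclideanSpace ℝ (Fin n), ∃ h : ℝ → EuclideanSpace ℝ (Fin n),
        ContinuousOn h (Set.Icc a b) ∧
        (∀ t ∈ Set.Icc a b, h t = h₀ + ∫ τ in a..t, (A₁ τ) (h τ)) ∧ B₁ h₀ = h b)
    (hB₂ : ∀ h₀ : EuclideanSpace ℝ (Fin n), ∃ h : ℝ → EuclideanSpace ℝ (Fin n),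
        ContinuousOn h (Set.Icc a b) ∧
        (∀ t ∈ Set.Icc a b, h t = h₀ + ∫ τ in a..t, (A₂ τ) (h τ)) ∧ B₂ h₀ = h b) :
    ‖B₁ - B₂‖ ≤
      Real.exp (max (∫ τ in a..b, ‖A₁ τ‖) (∫ τ in a..b, ‖A₂ τ‖)) *
        ∫ τ in a..b, ‖A₁ τ - A₂ τ‖ := by
  refine ContinuousLinearMap.opNorm_le_bound _
    (mul_nonneg (exp_pos _).le (intervalIntegral.integral_nonneg hab fun _ _ => norm_nonneg _))
    fun h₀ => ?_
  obtain ⟨h₁, hh₁, heq₁, hB₁h₀⟩ := hB₁ h₀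
  obtain ⟨h₂, hh₂, heq₂, hB₂h₀⟩ := hB₂ h₀
  rw [sub_apply, hB₁h₀, hB₂h₀]
  exact norm_sub_le_of_eq_add_integral hab hA₁ hA₂ hh₁ hh₂ heq₁ heq₂
end
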